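/- arXiv:1802.00160 — 4 statements merged into one kernel-verified Lean document; each statement's English description precedes it below -/
import Mathlib

section
/- Let a_1,...,a_K be real numbers in [0,1] and (λ_1,...,λ_K) a probability vector. If the sum of the a_k is at most K̃ for a nonnegative integer K̃ ≤ K, then the weighted sum ∑_k λ_k a_k is at most the maximum, over subsets X of {1,...,K} of cardinality K̃, of ∑_{k∈X} λ_k. -/
/-!
Take `X` maximising `∑_{k∈X} λ_k` among the `K̃`-subsets. Swapping one element shows
`λ_j ≤ λ_i` whenever `i ∈ X` and `j ∉ X`, so some `m ≥ 0` separates the weights on `X` from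
those off `X`. Then
`∑_{k∈X} λ_k - ∑_k λ_k a_k ≥ m ∑_{k∈X} (1 - a_k) - m ∑_{k∉X} a_k = m (K̃ - ∑_k a_k) ≥ 0`.
-/

open Finset

variable {ι : Type*}

theorem exists_card_eq_forall_sum_le [Fintype ι] {M : Type*} [AddCommMonoid M] [LinearOrder M]
    {n : ℕ} (hn : n ≤ Fintype.card ι) (f : ι → M) :
    ∃ X : Finset ι, X.card = n ∧ ∀ Y : Finset ι, Y.card = n → ∑ k ∈ Y, f k ≤ ∑ k ∈ X, f k := by
  obtain ⟨X, hX, hXmax⟩ := exists_max_image ((univ : Finset ι).powersetCard n)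
    (fun Y => ∑ k ∈ Y, f k) (powersetCard_nonempty.2 (by simpa using hn))
  exact ⟨X, (mem_powersetCard.1 hX).2,
    fun Y hY => hXmax Y (mem_powersetCard.2 ⟨subset_univ Y, hY⟩)⟩

theorem le_of_forall_sum_le_of_mem_of_notMem {M : Type*} [AddCommMonoid M] [LinearOrder M]
    [IsOrderedCancelAddMonoid M] [DecidableEq ι] {f : ι → M} {X : Finset ι}
    (hX : ∀ Y : Finset ι, Y.card = X.card → ∑ k ∈ Y, f k ≤ ∑ k ∈ X, f k)
    {i j : ι} (hi : i ∈ X) (hj : j ∉ X) : f j ≤ f i := by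
  have hj' : j ∉ X.erase i := fun h => hj (mem_of_mem_erase h)
  have hswap := hX (insert j (X.erase i)) (by
    rw [card_insert_of_notMem hj', card_erase_add_one hi])
  rw [sum_insert hj', ← sum_erase_add X f hi, add_comm (f j)] at hswap
  exact le_of_add_le_add_left hswap

theorem exists_nonneg_separating_of_forall_le [Fintype ι] {f : ι → ℝ} (hf : ∀ k, 0 ≤ f k)
    {X : Finset ι} (hsep : ∀ i ∈ X, ∀ j ∉ X, f j ≤ f i) :
    ∃ m, 0 ≤ m ∧ (∀ i ∈ X, m ≤ f i) ∧ ∀ j ∉ X, f j ≤ m := by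
  rcases X.eq_empty_or_nonempty with rfl | hX
  · exact ⟨∑ k, f k, sum_nonneg fun k _ => hf k, by simp,
      fun j _ => single_le_sum (fun k _ => hf k) (mem_univ j)⟩
  · obtain ⟨i₀, hi₀, hm⟩ := exists_mem_eq_inf' hX f
    exact ⟨X.inf' hX f, hm ▸ hf i₀, fun i hi => inf'_le f hi,
      fun j hj => le_inf' hX f fun i hi => hsep i hi j hj⟩

theorem sum_mul_le_sum_of_separating [Fintype ι] {lam a : ι → ℝ}
    (ha : ∀ k, a k ∈ Set.Icc (0 : ℝ) 1) {X : Finset ι} (hasum : ∑ k, a k ≤ X.card)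
    {m : ℝ} (hm : 0 ≤ m)
    (hmX : ∀ i ∈ X, m ≤ lam i) (hmXc : ∀ j ∉ X, lam j ≤ m) :
    ∑ k, lam k * a k ≤ ∑ k ∈ X, lam k := by
  classical
  have hX : ∑ k ∈ X, m * (1 - a k) ≤ ∑ k ∈ X, lam k * (1 - a k) :=
    sum_le_sum fun i hi => mul_le_mul_of_nonneg_right (hmX i hi) (sub_nonneg.2 (ha i).2)
  have hXc : ∑ k ∈ Xᶜ, lam k * a k ≤ ∑ k ∈ Xᶜ, m * a k :=
    sum_le_sum fun j hj => mul_le_mul_of_nonneg_right (hmXc j (mem_compl.1 hj)) (ha j).1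
  have hbalance : ∑ k ∈ Xᶜ, m * a k ≤ ∑ k ∈ X, m * (1 - a k) := by
    rw [← mul_sum, ← mul_sum, sum_sub_distrib, sum_const, nsmul_one]
    have := sum_add_sum_compl X a
    exact mul_le_mul_of_nonneg_left (by linarith) hm
  calc ∑ k, lam k * a k = ∑ k ∈ X, lam k * a k + ∑ k ∈ Xᶜ, lam k * a k :=
        (sum_add_sum_compl X _).symm
    _ ≤ ∑ k ∈ X, lam k * a k + ∑ k ∈ X, lam k * (1 - a k) := by linarith
    _ = ∑ k ∈ X, lam k := by rw [← sum_add_distrib]; simp [mul_sub]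

theorem stmt0_general (K Kt : ℕ) (hK : Kt ≤ K) (a lam : Fin K → ℝ)
    (ha : ∀ k, a k ∈ Set.Icc (0 : ℝ) 1) (hlam : ∀ k, 0 ≤ lam k)
    (hasum : ∑ k, a k ≤ (Kt : ℝ)) :
    ∃ X : Finset (Fin K), X.card = Kt ∧
      (∀ Y : Finset (Fin K), Y.card = Kt → ∑ k ∈ Y, lam k ≤ ∑ k ∈ X, lam k) ∧
      ∑ k, lam k * a k ≤ ∑ k ∈ X, lam k := by
  obtain ⟨X, rfl, hXmax⟩ := exists_card_eq_forall_sum_le (by simpa using hK) lam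
  obtain ⟨m, hm, hmX, hmXc⟩ := exists_nonneg_separating_of_forall_le hlam
    fun i hi j hj => le_of_forall_sum_le_of_mem_of_notMem hXmax hi hj
  exact ⟨X, rfl, hXmax, sum_mul_le_sum_of_separating ha hasum hm hmX hmXc⟩

/-- If `a_1,…,a_K ∈ [0,1]`, `(λ_1,…,λ_K)` is a probability vector, and
`∑ a_k ≤ K̃` for a nonnegative integer `K̃ ≤ K`, then `∑ λ_k a_k` is at most the maximum,
over subsets `X ⊆ {1,…,K}` with `|X| = K̃`, of `∑_{k∈X} λ_k` (the maximum being attained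
by some such subset). -/
theorem stmt0 (K Kt : ℕ) (hK : Kt ≤ K) (a lam : Fin K → ℝ)
    (ha : ∀ k, a k ∈ Set.Icc (0 : ℝ) 1) (hlam : ∀ k, 0 ≤ lam k)
    (hlamsum : ∑ k, lam k = 1) (hasum : ∑ k, a k ≤ (Kt : ℝ)) :
    ∃ X : Finset (Fin K), X.card = Kt ∧
      (∀ Y : Finset (Fin K), Y.card = Kt → ∑ k ∈ Y, lam k ≤ ∑ k ∈ X, lam k) ∧
      ∑ k, lam k * a k ≤ ∑ k ∈ X, lam k :=
  stmt0_general K Kt hK a lam ha hlam hasum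
end

section
/- The number of symplectic self-dual subspaces of F_2^{2N} (i.e., N-dimensional subspaces C with C = C^⊥) equals ∏_{n=0}^{N-1}(2^{2N-n} - 2^n) / ∏_{n=0}^{N-1}(2^N - 2^n). -/
/-!
Count the linearly independent isotropic `n`-tuples of a nondegenerate alternating form on a
`2n`-dimensional space over `𝔽_q` in two ways. Extending an isotropic `k`-tuple spanning `W` by
one vector amounts to choosing it in `W^⊥ \ W`, which has `q^(2n-k) - q^k` elements. On the other
hand, an isotropic `n`-tuple spans a subspace `C` with `C = C^⊥`, and each such `C` is spanned by
exactly the `∏_{i<n} (q^n - q^i)` ordered bases of `C`.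
-/

/-- `F_2^{2N}`, grouped into `N` blocks of two coordinates. -/
abbrev V (N : ℕ) := Fin N → ZMod 2 × ZMod 2

/-- The standard symplectic product `u ⊙ v = uᵀ P v` on `F_2^{2N}`, where `P` is
block-diagonal with `N` antidiagonal `2×2` blocks. -/
def symp {N : ℕ} (u v : V N) : ZMod 2 :=
  ∑ n, ((u n).1 * (v n).2 + (u n).2 * (v n).1)

/-- The symplectic dual `C^⊥ = {u : ∀ v ∈ C, u ⊙ v = 0}` of a subspace `C ⊆ F_2^{2N}`. -/
def sympDual {N : ℕ} (C : Submodule (ZMod 2) (V N)) : Submodule (ZMod 2) (V N) where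
  carrier := {u | ∀ v ∈ C, symp u v = 0}
  zero_mem' := by intro v hv; simp [symp]
  add_mem' := by
    intro a b ha hb v hv
    have h : symp (a + b) v = symp a v + symp b v := by
      simp only [symp, ← Finset.sum_add_distrib]
      refine Finset.sum_congr rfl fun n _ => ?_
      simp [Prod.fst_add, Prod.snd_add]; ring
    rw [h, ha v hv, hb v hv, add_zero]
  smul_mem' := by
    intro c u hu v hv
    have h : symp (c • u) v = c * symp u v := by
      simp only [symp, Finset.mul_sum]
      refine Finset.sum_congr rfl fun n _ => ?_
      simp [Prod.smul_fst, Prod.smul_snd, smul_eq_mul]; ring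
    rw [h, hu v hv, mul_zero]

open Module Submodule

namespace LinearMap.BilinForm

variable {K E : Type*} [Field K] [AddCommGroup E] [Module K E] {B : LinearMap.BilinForm K E}

variable (B) in
abbrev IsotropicFrame (k : ℕ) :=
  {v : Fin k → E // LinearIndependent K v ∧ ∀ i j, B (v i) (v j) = 0}

lemma mem_orthogonal_span_iff {s : Set E} {x : E} :
    x ∈ B.orthogonal (span K s) ↔ ∀ y ∈ s, B y x = 0 :=
  ⟨fun h y hy => h y (subset_span hy),
    fun h _ hn => span_le (p := ker (B.flip x)).2 h hn⟩

lemma span_le_orthogonal_span {k : ℕ} {v : Fin k → E} (hv : ∀ i j, B (v i) (v j) = 0) :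
    span K (Set.range v) ≤ B.orthogonal (span K (Set.range v)) := by
  rw [span_le]
  rintro _ ⟨j, rfl⟩
  rw [SetLike.mem_coe, mem_orthogonal_span_iff]
  rintro _ ⟨i, rfl⟩
  exact hv i j

lemma isotropic_finCons_iff (hA : B.IsAlt) {k : ℕ} {x : E} {w : Fin k → E} :
    (∀ i j,
      B ((Fin.cons x w : Fin (k + 1) → E) i) ((Fin.cons x w : Fin (k + 1) → E) j) = 0) ↔
      (∀ i j, B (w i) (w j) = 0) ∧ ∀ i, B (w i) x = 0 := by
  simp only [Fin.forall_fin_succ, Fin.cons_zero, Fin.cons_succ, hA.self_eq_zero, true_and]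
  exact ⟨fun h => ⟨fun i => (h.2 i).2, fun i => (h.2 i).1⟩,
    fun h => ⟨fun j => hA.isRefl _ _ (h.2 j), fun i => ⟨h.2 i, h.1 i⟩⟩⟩

variable (B) in
def isotropicFrameSuccEquiv (hA : B.IsAlt) (k : ℕ) :
    IsotropicFrame B (k + 1) ≃ Σ w : IsotropicFrame B k,
      ↥((B.orthogonal (span K (Set.range w.1)) : Set E) \ span K (Set.range w.1)) where
  toFun v :=
    have hli := linearIndependent_finSucc.1 v.2.1
    have hiso := (isotropic_finCons_iff hA).1 (Fin.cons_self_tail v.1 ▸ v.2.2)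
    ⟨⟨Fin.tail v.1, hli.1, hiso.1⟩,
      ⟨v.1 0, mem_orthogonal_span_iff.2 (by rintro _ ⟨i, rfl⟩; exact hiso.2 i), hli.2⟩⟩
  invFun w := ⟨Fin.cons w.2.1 w.1.1, linearIndependent_finCons.2 ⟨w.1.2.1, w.2.2.2⟩,
    (isotropic_finCons_iff hA).2
      ⟨w.1.2.2, fun i => mem_orthogonal_span_iff.1 w.2.2.1 _ ⟨i, rfl⟩⟩⟩
  left_inv v := by simp only [Fin.cons_self_tail]
  right_inv _ := rfl

section Lagrangian

variable [FiniteDimensional K E] {n : ℕ}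

lemma finrank_eq_of_eq_orthogonal (hB : B.Nondegenerate) (hE : finrank K E = 2 * n)
    {C : Submodule K E} (hC : C = B.orthogonal C) :
    finrank K C = n := by
  have hdual := finrank_orthogonal hB C
  rw [← hC] at hdual
  have hle := C.finrank_le
  omega

lemma span_eq_orthogonal_span (hB : B.Nondegenerate) (hE : finrank K E = 2 * n)
    (v : IsotropicFrame B n) :
    span K (Set.range v.1) = B.orthogonal (span K (Set.range v.1)) :=
  eq_of_le_of_finrank_eq (span_le_orthogonal_span v.2.2) <| by
    rw [finrank_orthogonal hB, finrank_span_eq_card v.2.1, Fintype.card_fin]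
    omega

def spanLagrangian (hB : B.Nondegenerate) (hE : finrank K E = 2 * n) (v : IsotropicFrame B n) :
    {C : Submodule K E // C = B.orthogonal C} :=
  ⟨span K (Set.range v.1), span_eq_orthogonal_span hB hE v⟩

def spanLagrangianFiberEquiv (hB : B.Nondegenerate) (hE : finrank K E = 2 * n)
    (C : {C : Submodule K E // C = B.orthogonal C}) :
    {v // spanLagrangian hB hE v = C} ≃ {s : Fin n → C.1 // LinearIndependent K s} where
  toFun v := ⟨fun i => ⟨v.1.1 i, (congrArg Subtype.val v.2).le (subset_span ⟨i, rfl⟩)⟩,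
    LinearIndependent.of_comp C.1.subtype v.1.2.1⟩
  invFun s := ⟨⟨C.1.subtype ∘ s.1, s.2.map' C.1.subtype C.1.ker_subtype,
      fun i j => C.2.le (s.1 j).2 _ (s.1 i).2⟩,
    Subtype.ext <| eq_of_le_of_finrank_eq (span_le.2 (Set.range_subset_iff.2 fun i => (s.1 i).2))
      ((finrank_span_eq_card (s.2.map' C.1.subtype C.1.ker_subtype)).trans <| by
        rw [Fintype.card_fin, finrank_eq_of_eq_orthogonal hB hE C.2])⟩
  left_inv _ := rfl
  right_inv _ := rfl

end Lagrangian

section Card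

variable [Fintype K] [Finite E]

local notation "q" => Fintype.card K

lemma natCard_orthogonal_diff (hB : B.Nondegenerate) {W : Submodule K E}
    (hW : W ≤ B.orthogonal W) :
    Nat.card ↥((B.orthogonal W : Set E) \ W) =
      q ^ (finrank K E - finrank K W) - q ^ finrank K W := by
  have ncard_eq (U : Submodule K E) : (U : Set E).ncard = q ^ finrank K U := by
    rw [← Nat.card_coe_set_eq, SetLike.coe_sort_coe, natCard_eq_pow_finrank (K := K),
      Nat.card_eq_fintype_card]
  rw [Nat.card_coe_set_eq, Set.ncard_sdiff hW, ncard_eq, ncard_eq, finrank_orthogonal hB]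

lemma natCard_isotropicFrame (hB : B.Nondegenerate) (hA : B.IsAlt) (k : ℕ) :
    Nat.card (IsotropicFrame B k) = ∏ i ∈ Finset.range k, (q ^ (finrank K E - i) - q ^ i) := by
  induction k with
  | zero =>
    have : Unique (IsotropicFrame B 0) :=
      ⟨⟨⟨finZeroElim, linearIndependent_empty_type, finZeroElim⟩⟩,
        fun _ => Subtype.ext (Subsingleton.elim _ _)⟩
    rw [Nat.card_unique, Finset.prod_range_zero]
  | succ k ih =>
    have := Fintype.ofFinite (IsotropicFrame B k)
    rw [Nat.card_congr (isotropicFrameSuccEquiv B hA k), Nat.card_sigma,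
      Finset.prod_range_succ, ← ih, Nat.card_eq_fintype_card, ← smul_eq_mul,
      ← Finset.card_univ, ← Finset.sum_const]
    refine Finset.sum_congr rfl fun w _ => ?_
    rw [natCard_orthogonal_diff hB (span_le_orthogonal_span w.2.2), finrank_span_eq_card w.2.1,
      Fintype.card_fin]

lemma natCard_lagrangian_mul (hB : B.Nondegenerate) (hA : B.IsAlt) {n : ℕ}
    (hE : finrank K E = 2 * n) :
    Nat.card {C : Submodule K E // C = B.orthogonal C} * ∏ i ∈ Finset.range n, (q ^ n - q ^ i) =
      ∏ i ∈ Finset.range n, (q ^ (2 * n - i) - q ^ i) := by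
  have := Fintype.ofFinite {C : Submodule K E // C = B.orthogonal C}
  rw [← hE, ← natCard_isotropicFrame hB hA,
    ← Nat.card_congr (Equiv.sigmaFiberEquiv (spanLagrangian hB hE)), Nat.card_sigma,
    Nat.card_eq_fintype_card, ← smul_eq_mul, ← Finset.card_univ, ← Finset.sum_const]
  refine Finset.sum_congr rfl fun C _ => ?_
  have hC := finrank_eq_of_eq_orthogonal hB hE C.2
  rw [Nat.card_congr (spanLagrangianFiberEquiv hB hE C), card_linearIndependent hC.ge, hC,
    Fin.prod_univ_eq_prod_range (fun i => q ^ n - q ^ i)]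

lemma natCard_lagrangian (hB : B.Nondegenerate) (hA : B.IsAlt) {n : ℕ}
    (hE : finrank K E = 2 * n) :
    Nat.card {C : Submodule K E // C = B.orthogonal C} =
      (∏ i ∈ Finset.range n, (q ^ (2 * n - i) - q ^ i)) /
        ∏ i ∈ Finset.range n, (q ^ n - q ^ i) := by
  refine Nat.eq_div_of_mul_eq_left (Finset.prod_ne_zero_iff.2 fun i hi => ?_)
    (natCard_lagrangian_mul hB hA hE)
  exact Nat.sub_ne_zero_of_lt (Nat.pow_lt_pow_right Fintype.one_lt_card (Finset.mem_range.1 hi))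

end Card

end LinearMap.BilinForm

section Symplectic

variable {N : ℕ}

lemma symp_comm (u v : V N) : symp u v = symp v u :=
  Finset.sum_congr rfl fun n _ => by ring

lemma symp_self (u : V N) : symp u u = 0 :=
  Finset.sum_eq_zero fun n _ => by rw [mul_comm]; exact CharTwo.add_self_eq_zero _

lemma symp_add_left (u v w : V N) : symp (u + v) w = symp u w + symp v w := by
  simp only [symp, ← Finset.sum_add_distrib, Pi.add_apply, Prod.fst_add, Prod.snd_add]
  exact Finset.sum_congr rfl fun n _ => by ring

lemma symp_smul_left (c : ZMod 2) (u v : V N) : symp (c • u) v = c * symp u v := by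
  simp only [symp, Finset.mul_sum, Pi.smul_apply, Prod.smul_fst, Prod.smul_snd, smul_eq_mul]
  exact Finset.sum_congr rfl fun n _ => by ring

lemma symp_single_right (x : V N) (n : Fin N) (a b : ZMod 2) :
    symp x (Pi.single n (a, b)) = (x n).1 * b + (x n).2 * a := by
  rw [symp, Finset.sum_eq_single n (fun m _ hm => by simp [Pi.single_eq_of_ne hm])
    (fun h => absurd (Finset.mem_univ n) h), Pi.single_eq_same]

variable (N) in
def sympForm : LinearMap.BilinForm (ZMod 2) (V N) :=
  LinearMap.mk₂ (ZMod 2) symp symp_add_left (fun c u v => symp_smul_left c u v)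
    (fun u v w => by simp only [symp_comm u, symp_add_left])
    (fun c u v => by simp only [symp_comm u, symp_smul_left, smul_eq_mul])

@[simp] lemma sympForm_apply (u v : V N) : sympForm N u v = symp u v := rfl

lemma sympForm_isAlt : (sympForm N).IsAlt := symp_self

lemma sympForm_nondegenerate : (sympForm N).Nondegenerate := by
  refine sympForm_isAlt.isRefl.nondegenerate_iff_separatingLeft.2 fun x hx => funext fun n => ?_
  have h1 := hx (Pi.single n (0, 1))
  have h2 := hx (Pi.single n (1, 0))
  simp only [sympForm_apply, symp_single_right, mul_one, mul_zero, add_zero, zero_add] at h1 h2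
  exact Prod.ext h1 h2

lemma sympDual_eq_orthogonal (C : Submodule (ZMod 2) (V N)) :
    sympDual C = (sympForm N).orthogonal C := by
  ext u
  exact forall₂_congr fun v _ => by rw [sympForm_apply, symp_comm]

lemma finrank_V : finrank (ZMod 2) (V N) = 2 * N := by
  simp [Module.finrank_pi_fintype, Module.finrank_prod, mul_comm]

end Symplectic

/-- The number of symplectic self-dual subspaces of `F_2^{2N}` equals
`∏_{n=0}^{N-1}(2^{2N-n} - 2^n) / ∏_{n=0}^{N-1}(2^N - 2^n)`. -/
theorem stmt2 (N : ℕ) :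
    Nat.card {C : Submodule (ZMod 2) (V N) // C = sympDual C} =
      (∏ n ∈ Finset.range N, (2 ^ (2 * N - n) - 2 ^ n)) /
        (∏ n ∈ Finset.range N, (2 ^ N - 2 ^ n)) := by
  simp only [sympDual_eq_orthogonal]
  rw [LinearMap.BilinForm.natCard_lagrangian sympForm_nondegenerate sympForm_isAlt finrank_V,
    ZMod.card]
end

section
/- Let p be a probability vector on F_2^2 with all entries positive and entropy H(p) = -∑_x p_x log₂ p_x. For m ∈ (F_2^2)^N set q_m = ∏_n p_{m_n}. Then for any ε > 0, any N, and any subset X ⊆ (F_2^2)^N with |X| = 2^N, ∑_{m∈X} q_m < 2^{N(1−H(p)+ε)} + 2 exp(−2ε²N/Δ²), where Δ = log₂(max_x p_x) − log₂(min_x p_x) > 0. -/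
/-!
Put `Y x = log₂ p_x`: a random variable with mean `-H(p)` and range of width `Δ`, and
`log₂ q_m = ∑ₙ Y(mₙ)`. A word `m ∈ X` with `log₂ q_m < N(ε - H(p))` has
`q_m < 2^{N(ε - H(p))}`, and there are at most `|X| = 2^N` of them. Every other word satisfies
`∑ₙ (Y(mₙ) + H(p)) ≥ Nε`, and by Hoeffding's inequality for the product measure these words
carry total mass at most `exp(-2ε²N/Δ²)`.
-/

open scoped Classical

/-- The four-element index set `F_2^2` of the Bell basis. -/
abbrev F4 := ZMod 2 × ZMod 2

/-- The base-2 entropy `H(p) = -∑_x p_x log₂ p_x` of a probability vector on `F_2^2`. -/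
noncomputable def H4 (p : F4 → ℝ) : ℝ := -∑ x, p x * Real.logb 2 (p x)

/-- The product probability `q_m = ∏_n p_{m_n}` on `(F_2^2)^N`. -/
def qprod {N : ℕ} (p : F4 → ℝ) (m : Fin N → F4) : ℝ := ∏ n, p (m n)

/-- The typical set `T(ε) = {m : |−(1/N) log₂ q_m − H(p)| < ε}`. -/
noncomputable def typFinset (N : ℕ) (p : F4 → ℝ) (ε : ℝ) : Finset (Fin N → F4) :=
  Finset.univ.filter fun m =>
    |(-(1 / N : ℝ)) * Real.logb 2 (qprod p m) - H4 p| < ε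

/-- `Δ = log₂(max_x p_x) − log₂(min_x p_x)`. -/
noncomputable def Δ4 (p : F4 → ℝ) : ℝ :=
  Real.logb 2 (Finset.univ.sup' Finset.univ_nonempty p) -
    Real.logb 2 (Finset.univ.inf' Finset.univ_nonempty p)

open Finset MeasureTheory ProbabilityTheory

namespace PMF

variable {α : Type*} [Fintype α]

noncomputable def ofRealWeights (p : α → ℝ) (hp : ∀ x, 0 ≤ p x) (hsum : ∑ x, p x = 1) :
    PMF α :=
  ofFintype (fun x => ENNReal.ofReal (p x)) <| by
    rw [← ENNReal.ofReal_sum_of_nonneg fun x _ => hp x, hsum, ENNReal.ofReal_one]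

variable {p : α → ℝ} {hp : ∀ x, 0 ≤ p x} {hsum : ∑ x, p x = 1}

lemma toReal_ofRealWeights_apply (x : α) : (ofRealWeights p hp hsum x).toReal = p x :=
  ENNReal.toReal_ofReal (hp x)

variable [MeasurableSpace α] [MeasurableSingletonClass α]

lemma integral_ofRealWeights (f : α → ℝ) :
    ∫ x, f x ∂(ofRealWeights p hp hsum).toMeasure = ∑ x, p x * f x := by
  simp only [integral_eq_sum, toReal_ofRealWeights_apply, smul_eq_mul]

lemma measureReal_pi_ofRealWeights {ι : Type*} [Fintype ι] (S : Finset (ι → α)) :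
    (Measure.pi fun _ : ι => (ofRealWeights p hp hsum).toMeasure).real S =
      ∑ m ∈ S, ∏ i, p (m i) := by
  rw [← sum_measureReal_singleton]
  refine sum_congr rfl fun m _ => ?_
  rw [measureReal_def, Measure.pi_singleton, ENNReal.toReal_prod]
  simp [toReal_ofRealWeights_apply]

end PMF

theorem hoeffding_sum_prod_le {ι α : Type*} [Fintype ι] [Fintype α] (p : α → ℝ)
    (hp : ∀ x, 0 ≤ p x) (hsum : ∑ x, p x = 1) (Y : α → ℝ) {a b : ℝ}
    (hY : ∀ x, Y x ∈ Set.Icc a b) {t : ℝ} (ht : 0 ≤ t) :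
    ∑ m : ι → α with Fintype.card ι * t ≤ ∑ i, (Y (m i) - ∑ x, p x * Y x),
        ∏ i, p (m i) ≤
      Real.exp (-2 * t ^ 2 * Fintype.card ι / (b - a) ^ 2) := by
  -- The left side is `P {m | card ι * t ≤ ∑ i, (Y (m i) - 𝔼 Y)}` for the product measure `P`
  -- under which the coordinates are i.i.d. with law `p`.
  let _ : MeasurableSpace α := ⊤
  have : DiscreteMeasurableSpace α := ⟨fun _ => trivial⟩
  set P := Measure.pi fun _ : ι => (PMF.ofRealWeights p hp hsum).toMeasure
  have hmean : ∀ i, P[fun m => Y (m i)] = ∑ x, p x * Y x := fun i => by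
    rw [integral_comp_eval (Measurable.of_discrete).aestronglyMeasurable,
      PMF.integral_ofRealWeights]
  have hsubG : ∀ i ∈ (univ : Finset ι), HasSubgaussianMGF (fun m => Y (m i) - ∑ x, p x * Y x)
      ((‖b - a‖₊ / 2) ^ 2) P := fun i _ => by
    simpa only [hmean] using hasSubgaussianMGF_of_mem_Icc (μ := P) (X := fun m => Y (m i))
      (Measurable.of_discrete).aemeasurable (ae_of_all _ fun m => hY (m i))
  have hindep : iIndepFun (fun i (m : ι → α) => Y (m i) - ∑ x, p x * Y x) P :=
    iIndepFun_pi (X := fun _ y => Y y - ∑ x, p x * Y x) fun _ =>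
      (Measurable.of_discrete).aemeasurable
  have htail := HasSubgaussianMGF.measure_sum_ge_le_of_iIndepFun hindep hsubG
    (ε := Fintype.card ι * t) (by positivity)
  rw [← coe_filter_univ, PMF.measureReal_pi_ofRealWeights] at htail
  refine htail.trans_eq (congrArg Real.exp ?_)
  simp only [sum_const, card_univ, nsmul_eq_mul, NNReal.coe_mul, NNReal.coe_natCast,
    NNReal.coe_pow, NNReal.coe_div, coe_nnnorm, Real.norm_eq_abs, NNReal.coe_ofNat, div_pow,
    sq_abs]
  rcases eq_or_ne (Fintype.card ι : ℝ) 0 with h0 | h0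
  · simp [h0]
  · field_simp

lemma sum_filter_logb_lt_le {β : Type*} (X : Finset β) (f : β → ℝ)
    (hf : ∀ m ∈ X, 0 < f m) {k : ℕ} (hX : X.card ≤ 2 ^ k) (s : ℝ) :
    ∑ m ∈ X with Real.logb 2 (f m) < s, f m ≤ 2 ^ ((k : ℝ) + s) := by
  calc ∑ m ∈ X with Real.logb 2 (f m) < s, f m
      ≤ #{m ∈ X | Real.logb 2 (f m) < s} • (2 : ℝ) ^ s := by
        refine sum_le_card_nsmul _ _ _ fun m hm => ?_
        rw [mem_filter] at hm
        exact ((Real.logb_lt_iff_lt_rpow one_lt_two (hf m hm.1)).1 hm.2).le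
    _ ≤ 2 ^ k * 2 ^ s := by
        rw [nsmul_eq_mul]
        gcongr
        exact_mod_cast (card_filter_le _ _).trans hX
    _ = 2 ^ ((k : ℝ) + s) := by rw [Real.rpow_add two_pos, Real.rpow_natCast]

lemma qprod_pos {N : ℕ} {p : F4 → ℝ} (hpos : ∀ x, 0 < p x) (m : Fin N → F4) :
    0 < qprod p m :=
  prod_pos fun n _ => hpos (m n)

lemma logb_qprod {N : ℕ} {p : F4 → ℝ} (hpos : ∀ x, 0 < p x) (m : Fin N → F4) :
    Real.logb 2 (qprod p m) = ∑ n, Real.logb 2 (p (m n)) :=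
  Real.logb_prod _ _ fun n _ => (hpos (m n)).ne'

lemma logb_mem_Icc {p : F4 → ℝ} (hpos : ∀ x, 0 < p x) (x : F4) :
    Real.logb 2 (p x) ∈ Set.Icc (Real.logb 2 (univ.inf' univ_nonempty p))
      (Real.logb 2 (univ.sup' univ_nonempty p)) := by
  obtain ⟨y, -, hy⟩ := exists_mem_eq_inf' univ_nonempty p
  exact ⟨Real.logb_le_logb_of_le one_lt_two (hy ▸ hpos y) (inf'_le p (mem_univ x)),
    Real.logb_le_logb_of_le one_lt_two (hpos x) (le_sup' p (mem_univ x))⟩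

theorem stmt8_general (p : F4 → ℝ) (hpos : ∀ x, 0 < p x) (hsum : ∑ x, p x = 1)
    (ε : ℝ) (hε : 0 < ε) (N : ℕ)
    (X : Finset (Fin N → F4)) (hX : X.card = 2 ^ N) :
    ∑ m ∈ X, qprod p m <
      2 ^ ((N : ℝ) * (1 - H4 p + ε)) +
        2 * Real.exp (-2 * ε ^ 2 * N / (Δ4 p) ^ 2) := by
  have hcentered : ∀ m : Fin N → F4,
      ∑ n, (Real.logb 2 (p (m n)) - ∑ x, p x * Real.logb 2 (p x)) =
        Real.logb 2 (qprod p m) + N * H4 p := fun m => by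
    rw [sum_sub_distrib, logb_qprod hpos, sum_const, card_univ, Fintype.card_fin, nsmul_eq_mul,
      H4, mul_neg, sub_eq_add_neg]
  rw [← sum_filter_add_sum_filter_not X fun m => Real.logb 2 (qprod p m) < N * (ε - H4 p)]
  have htypical := sum_filter_logb_lt_le X (qprod p) (fun m _ => qprod_pos hpos m) hX.le
    (N * (ε - H4 p))
  have hatypical : ∑ m ∈ X with ¬Real.logb 2 (qprod p m) < N * (ε - H4 p), qprod p m ≤
      Real.exp (-2 * ε ^ 2 * N / (Δ4 p) ^ 2) := by
    have hoeffding := hoeffding_sum_prod_le (ι := Fin N) p (fun x => (hpos x).le) hsum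
      _ (logb_mem_Icc hpos) hε.le
    rw [Fintype.card_fin] at hoeffding
    refine (sum_le_sum_of_subset_of_nonneg ?_ fun m _ _ => (qprod_pos hpos m).le).trans
      hoeffding
    intro m hm
    simp only [mem_filter, mem_univ, true_and, not_lt, hcentered] at hm ⊢
    linarith [hm.2]
  have hexp := Real.exp_pos (-2 * ε ^ 2 * N / (Δ4 p) ^ 2)
  rw [show (N : ℝ) * (1 - H4 p + ε) = N + N * (ε - H4 p) by ring]
  linarith

/-- for any `X ⊆ (F_2^2)^N` with `|X| = 2^N`,
`∑_{m∈X} q_m < 2^{N(1−H(p)+ε)} + 2 exp(−2ε²N/Δ²)`. -/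
theorem stmt8 (p : F4 → ℝ) (hpos : ∀ x, 0 < p x) (hsum : ∑ x, p x = 1)
    (hΔ : 0 < Δ4 p) (ε : ℝ) (hε : 0 < ε) (N : ℕ)
    (X : Finset (Fin N → F4)) (hX : X.card = 2 ^ N) :
    ∑ m ∈ X, qprod p m <
      2 ^ ((N : ℝ) * (1 - H4 p + ε)) +
        2 * Real.exp (-2 * ε ^ 2 * N / (Δ4 p) ^ 2) :=
  stmt8_general p hpos hsum ε hε N X hX
end

section
/- Let p be a probability vector on F_2^2 with all entries positive and H(p) > 1, where H(p) = -∑_x p_x log₂ p_x. For m ∈ (F_2^2)^N set q_m = ∏_n p_{m_n}, and define f(N) = max over subsets X ⊆ (F_2^2)^N with |X| = 2^N of ∑_{m∈X} q_m. Then f(N) → 0 as N → ∞. -/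
open scoped Classical

/-! For `α ≥ 1` the power-mean inequality on a set `X` of `2 ^ N` sequences gives
`(∑_{m ∈ X} q_m) ^ α ≤ |X| ^ (α - 1) ∑_m q_m ^ α = (2 ^ (α - 1) ∑_x p_x ^ α) ^ N`.
The base is `1` at `α = 1` and has derivative `log 2 * (1 - H(p)) < 0` there, so it is `< 1`
for some `α > 1`, and `f(N) ^ α` decays geometrically. -/

open Real Filter Topology Finset

lemma exists_gt_lt_of_hasDerivAt_neg {f : ℝ → ℝ} {f' x : ℝ} (hf : HasDerivAt f f' x)
    (hf' : f' < 0) : ∃ y, x < y ∧ f y < f x := by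
  obtain ⟨y, hslope, hy⟩ :=
    ((hf.hasDerivWithinAt (s := Set.Ioi x)).limsup_slope_le' (lt_irrefl x) hf').and
      self_mem_nhdsWithin |>.exists
  refine ⟨y, hy, ?_⟩
  rw [slope_def_field, div_neg_iff] at hslope
  have hy' : 0 < y - x := sub_pos.mpr hy
  rcases hslope with ⟨-, h⟩ | ⟨h, -⟩ <;> linarith

lemma exists_two_rpow_mul_sum_rpow_lt_one {ι : Type*} [Fintype ι] (p : ι → ℝ)
    (hpos : ∀ x, 0 < p x) (hsum : ∑ x, p x = 1) (hH : 1 < -∑ x, p x * logb 2 (p x)) :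
    ∃ α : ℝ, 1 < α ∧ (2 : ℝ) ^ (α - 1) * ∑ x, p x ^ α < 1 := by
  set φ : ℝ → ℝ := fun α => (2 : ℝ) ^ (α - 1) * ∑ x, p x ^ α
  have hφ1 : φ 1 = 1 := by simp [φ, hsum]
  have hderiv : HasDerivAt φ (log 2 + ∑ x, p x * log (p x)) 1 := by
    have h2 := ((hasDerivAt_id' (1 : ℝ)).sub_const 1).const_rpow two_pos
    have hs := HasDerivAt.fun_sum (u := univ) fun x _ =>
      (hasStrictDerivAt_const_rpow (hpos x) 1).hasDerivAt
    exact (h2.fun_mul hs).congr_deriv (by simp [hsum])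
  have hneg : log 2 + ∑ x, p x * log (p x) < 0 := by
    have hlog : ∑ x, p x * log (p x) = log 2 * ∑ x, p x * logb 2 (p x) := by
      simp only [logb, mul_sum]
      exact sum_congr rfl fun x _ => by field_simp
    rw [hlog]
    nlinarith [log_pos one_lt_two]
  obtain ⟨α, hα, hφα⟩ := exists_gt_lt_of_hasDerivAt_neg hderiv hneg
  exact ⟨α, hα, hφα.trans_eq hφ1⟩

lemma qprod_nonneg {N : ℕ} {p : F4 → ℝ} (hp : ∀ x, 0 ≤ p x) (m : Fin N → F4) :
    0 ≤ qprod p m :=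
  prod_nonneg fun n _ => hp (m n)

lemma qprod_rpow {N : ℕ} {p : F4 → ℝ} (hp : ∀ x, 0 ≤ p x) (m : Fin N → F4) (α : ℝ) :
    qprod p m ^ α = qprod (fun x => p x ^ α) m :=
  (Real.finsetProd_rpow _ _ (fun n _ => hp (m n)) α).symm

lemma sum_qprod (p : F4 → ℝ) (N : ℕ) : ∑ m : Fin N → F4, qprod p m = (∑ x, p x) ^ N := by
  rw [sum_pow', Fintype.piFinset_univ]
  rfl

lemma rpow_sum_qprod_le {p : F4 → ℝ} (hp : ∀ x, 0 ≤ p x) {N : ℕ} (X : Finset (Fin N → F4))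
    {α : ℝ} (hα : 1 ≤ α) :
    (∑ m ∈ X, qprod p m) ^ α ≤ (#X : ℝ) ^ (α - 1) * (∑ x, p x ^ α) ^ N := by
  calc (∑ m ∈ X, qprod p m) ^ α ≤ (#X : ℝ) ^ (α - 1) * ∑ m ∈ X, qprod p m ^ α :=
        rpow_sum_le_const_mul_sum_rpow_of_nonneg X hα fun m _ => qprod_nonneg hp m
    _ ≤ (#X : ℝ) ^ (α - 1) * ∑ m, qprod p m ^ α := by
        gcongr
        · exact fun m _ _ => rpow_nonneg (qprod_nonneg hp m) α
        · exact subset_univ X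
    _ = (#X : ℝ) ^ (α - 1) * (∑ x, p x ^ α) ^ N := by
        simp only [qprod_rpow hp, sum_qprod]

/-- if `H(p) > 1`, then
`f(N) = max_{X ⊆ (F_2^2)^N, |X| = 2^N} ∑_{m∈X} q_m → 0` as `N → ∞`. -/
theorem stmt9 (p : F4 → ℝ) (hpos : ∀ x, 0 < p x) (hsum : ∑ x, p x = 1)
    (hH : 1 < H4 p) :
    ∀ δ > (0 : ℝ), ∃ N₀ : ℕ, ∀ N ≥ N₀, ∀ X : Finset (Fin N → F4),
      X.card = 2 ^ N → ∑ m ∈ X, qprod p m < δ := by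
  intro δ hδ
  have hp : ∀ x, 0 ≤ p x := fun x => (hpos x).le
  obtain ⟨α, hα, hr⟩ := exists_two_rpow_mul_sum_rpow_lt_one p hpos hsum hH
  set r := (2 : ℝ) ^ (α - 1) * ∑ x, p x ^ α
  have hr0 : 0 ≤ r := mul_nonneg (by positivity) (sum_nonneg fun x _ => rpow_nonneg (hp x) α)
  obtain ⟨N₀, hN₀⟩ := eventually_atTop.mp
    ((tendsto_pow_atTop_nhds_zero_of_lt_one hr0 hr).eventually
      (gt_mem_nhds (rpow_pos_of_pos hδ α)))
  refine ⟨N₀, fun N hN X hX => ?_⟩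
  have hbound : (∑ m ∈ X, qprod p m) ^ α ≤ r ^ N := by
    calc (∑ m ∈ X, qprod p m) ^ α ≤ (#X : ℝ) ^ (α - 1) * (∑ x, p x ^ α) ^ N :=
          rpow_sum_qprod_le hp X hα.le
      _ = r ^ N := by
          rw [hX, mul_pow, Nat.cast_pow, Nat.cast_ofNat, rpow_pow_comm zero_le_two]
  have hnonneg : 0 ≤ ∑ m ∈ X, qprod p m := sum_nonneg fun m _ => qprod_nonneg hp m
  exact (rpow_lt_rpow_iff hnonneg hδ.le (by linarith)).mp (hbound.trans_lt (hN₀ N hN))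
end
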